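/- Let K ≥ 1 and let θ_1, ..., θ_K be real numbers such that 1, cos(θ_1), ..., cos(θ_K) are linearly independent over ℚ, and fix an index i ∈ {1, ..., K}. For a positive integer d let h(θ; d) := (1/√2)·(1, exp(2πi·d·cos θ)) ∈ ℂ². Then for every ε > 0 there exists a positive integer d such that ‖h(θ_i; d) − u‖ < ε and ‖h(θ_k; d) − v‖ < ε for every k ≠ i, where u = (1,1)/√2 and v = (1,−1)/√2 are orthogonal unit vectors in ℂ². In particular, for such d all interference channel vectors h(θ_k; d), k ≠ i, lie within ε of a common one-dimensional subspace of ℂ² that is orthogonal to a vector within ε of the desired channel vector h(θ_i; d). -/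

import Mathlib

/-- Channel (array manifold) vector of a far-field source at angle `θ` for a
two-antenna receiver with element separation `d` wavelengths:
`h(θ; d) = (1/√2)·(1, exp(2πi·d·cos θ)) ∈ ℂ²`. -/
noncomputable def channelVec (θ : ℝ) (d : ℕ) : EuclideanSpace ℂ (Fin 2) :=
  (WithLp.equiv 2 (Fin 2 → ℂ)).symm
    ![(1 : ℂ) / Real.sqrt 2,
      Complex.exp (2 * Real.pi * Complex.I * d * Real.cos θ) / Real.sqrt 2]

noncomputable section
namespace IA
open Finset

def Ee (x : ℝ) : ℂ := Complex.exp (2 * Real.pi * Complex.I * x)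

lemma Ee_eq (x : ℝ) : Ee x = Complex.exp (((2 * Real.pi * x : ℝ) : ℂ) * Complex.I) := by
  unfold Ee; congr 1; push_cast; ring

lemma Ee_add (x y : ℝ) : Ee (x + y) = Ee x * Ee y := by
  unfold Ee; rw [← Complex.exp_add]; congr 1; push_cast; ring

lemma Ee_pow (x : ℝ) (d : ℕ) : Ee x ^ d = Ee (d * x) := by
  unfold Ee; rw [← Complex.exp_nat_mul]; congr 1; push_cast; ring

lemma Ee_int (n : ℤ) : Ee n = 1 := by
  unfold Ee
  rw [show 2 * Real.pi * Complex.I * (n : ℝ) = (n : ℂ) * (2 * Real.pi * Complex.I) by push_cast; ring]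
  exact Complex.exp_int_mul_two_pi_mul_I n

lemma Ee_zero : Ee 0 = 1 := by simpa using Ee_int 0

lemma abs_Ee (x : ℝ) : ‖Ee x‖ = 1 := by
  rw [Ee_eq]; exact Complex.norm_exp_ofReal_mul_I _

lemma Ee_half : Ee (1/2) = -1 := by
  unfold Ee
  rw [show 2 * Real.pi * Complex.I * ((1:ℝ)/2 : ℝ) = Real.pi * Complex.I by push_cast; ring]
  exact Complex.exp_pi_mul_I

lemma two_cos (y : ℝ) : ((2 * Real.cos (Real.pi * y) : ℝ) : ℂ) = Ee (y/2) + Ee (-(y/2)) := by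
  rw [Ee_eq, Ee_eq, Complex.exp_mul_I, Complex.exp_mul_I]
  push_cast
  rw [show ((2:ℂ) * Real.pi * (-(y/2))) = -(2 * Real.pi * (y/2)) by ring]
  rw [Complex.cos_neg, Complex.sin_neg,
    show ((2:ℂ) * Real.pi * (y/2)) = Real.pi * y by ring]
  ring

lemma cos_pow (y : ℝ) (m : ℕ) :
    ((Real.cos (Real.pi * y) : ℂ))^(2*m) * (4:ℂ)^m
      = ∑ j ∈ Finset.range (2*m+1),
          ((2*m).choose j : ℂ) * Ee (y * ((j:ℝ) - m)) := by
  have h4 : ((Real.cos (Real.pi * y) : ℂ))^(2*m) * (4:ℂ)^m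
      = ((2 * Real.cos (Real.pi * y) : ℝ) : ℂ)^(2*m) := by
    push_cast
    rw [mul_pow, pow_mul 2, show (2:ℂ)^2 = 4 by norm_num, pow_mul]
    ring
  rw [h4, two_cos, add_pow]
  refine Finset.sum_congr rfl fun j hj => ?_
  rw [Finset.mem_range] at hj
  have hj' : j ≤ 2*m := by omega
  rw [Ee_pow, Ee_pow, ← Ee_add]
  rw [show (j:ℝ) * (y/2) + (((2*m - j : ℕ)):ℝ) * (-(y/2)) = y * ((j:ℝ) - m) by
    rw [Nat.cast_sub hj']; push_cast; ring]
  ring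

lemma geom_bound {z : ℂ} (hz : ‖z‖ = 1) (hz1 : z ≠ 1) (N : ℕ) :
    ‖∑ d ∈ Finset.range N, z^(d+1)‖ ≤ 2 / ‖z - 1‖ := by
  have h : ∑ d ∈ Finset.range N, z^(d+1) = z * ((z^N - 1)/(z-1)) := by
    rw [← geom_sum_eq hz1, Finset.mul_sum]
    exact Finset.sum_congr rfl fun d _ => by ring
  rw [h, norm_mul, hz, one_mul, norm_div]
  have h1 : ‖z^N - 1‖ ≤ 2 := by
    calc ‖z^N - 1‖ ≤ ‖z^N‖ + 1 := by
          simpa using norm_sub_le (z^N) 1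
      _ ≤ 2 := by rw [norm_pow, hz, one_pow]; norm_num
  have h2 : 0 < ‖z - 1‖ := by
    simpa [sub_eq_zero] using hz1
  exact div_le_div_of_nonneg_right h1 h2.le

lemma Ee_sub_int (x : ℝ) (n : ℤ) : Ee (x - n) = Ee x := by
  have h := Ee_add (x - n) n
  rw [sub_add_cancel] at h
  rw [h, Ee_int, mul_one]

lemma abs_Ee_sub_one (r : ℝ) (h : 2 * Real.pi * |r| ≤ 1) :
    ‖Ee r - 1‖ ≤ 4 * Real.pi * |r| := by
  have habs : ‖2 * Real.pi * Complex.I * (r:ℂ)‖ = 2 * Real.pi * |r| := by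
    simp [Complex.norm_real, Complex.norm_two, abs_of_pos Real.pi_pos]
  have := Complex.norm_exp_sub_one_le (x := 2 * Real.pi * Complex.I * (r:ℂ)) (by rw [habs]; exact h)
  rw [habs] at this
  unfold Ee
  linarith

lemma Ee_near_int (x : ℝ) (n : ℤ) (h1 : 2*Real.pi*|x - n| ≤ 1) :
    ‖Ee x - 1‖ ≤ 4*Real.pi*|x - n| := by
  rw [← Ee_sub_int x n]
  exact abs_Ee_sub_one _ h1

lemma Ee_near_half (x : ℝ) (n : ℤ) (h1 : 2*Real.pi*|x - 1/2 - n| ≤ 1) :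
    ‖Ee x + 1‖ ≤ 4*Real.pi*|x - 1/2 - n| := by
  have key : Ee x + 1 = -(Ee (x - 1/2 - n) - 1) := by
    have h2 : Ee (x - 1/2 - n) * Ee (1/2) = Ee x := by
      rw [← Ee_add, ← Ee_sub_int x n]
      ring_nf
    rw [Ee_half] at h2
    rw [← h2]; ring
  rw [key, norm_neg]
  exact abs_Ee_sub_one _ h1

lemma cos_sq_lt {y δ : ℝ} (hδ : 0 < δ) (hδ' : δ < 1/2)
    (h : Real.cos (Real.pi*δ)^2 < Real.cos (Real.pi*y)^2) :
    |y - round y| < δ := by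
  have hπ := Real.pi_pos
  have hr : |y - (round y : ℤ)| ≤ 1/2 := abs_sub_round y
  rw [Real.cos_sq, Real.cos_sq] at h
  have h2 : Real.cos (2 * (Real.pi * δ)) < Real.cos (2 * (Real.pi * y)) := by linarith
  have hy : Real.cos (2 * (Real.pi * y)) = Real.cos (2 * Real.pi * |y - round y|) := by
    rw [show (2 * Real.pi * |y - (round y : ℤ)|) = |2 * Real.pi * (y - round y)| by
      rw [abs_mul, abs_of_pos (by positivity : (0:ℝ) < 2 * Real.pi)]]
    rw [Real.cos_abs]
    have h3 := Real.cos_add_int_mul_two_pi (2 * Real.pi * (y - round y)) (round y)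
    rw [← h3]
    congr 1
    push_cast
    ring
  rw [hy] at h2
  by_contra hcon
  push_neg at hcon
  have : Real.cos (2 * Real.pi * |y - round y|) ≤ Real.cos (2 * (Real.pi * δ)) := by
    rcases eq_or_lt_of_le hcon with he | hlt
    · rw [← he]; ring_nf; exact le_refl _
    · exact le_of_lt (Real.cos_lt_cos_of_nonneg_of_le_pi (by positivity)
        (by nlinarith) (by nlinarith))
  linarith

lemma q_lt_one {δ : ℝ} (hδ : 0 < δ) (hδ' : δ < 1/2) : Real.cos (Real.pi * δ)^2 < 1 := by
  have hπ := Real.pi_pos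
  rw [Real.cos_sq]
  have : Real.cos (2 * (Real.pi * δ)) < Real.cos 0 :=
    Real.cos_lt_cos_of_nonneg_of_le_pi (le_refl 0) (by nlinarith) (by nlinarith)
  rw [Real.cos_zero] at this
  linarith

lemma Ee_sum {ι : Type*} (s : Finset ι) (f : ι → ℝ) :
    Ee (∑ k ∈ s, f k) = ∏ k ∈ s, Ee (f k) := by
  unfold Ee
  rw [← Complex.exp_sum]
  congr 1
  push_cast
  rw [Finset.mul_sum]

lemma kronecker {K : ℕ} (α t : Fin K → ℝ)
    (hirr : ∀ (n : ℤ) (e : Fin K → ℤ), ((n:ℝ) + ∑ k, (e k : ℝ) * α k = 0) → ∀ k, e k = 0)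
    {δ : ℝ} (hδ : 0 < δ) (hδ' : δ < 1/2) :
    ∃ d : ℕ, 0 < d ∧ ∀ k, |(d:ℝ) * α k - t k - round ((d:ℝ) * α k - t k)| < δ := by
  have hπ := Real.pi_pos
  set q : ℝ := Real.cos (Real.pi * δ)^2 with hqdef
  have hq0 : 0 ≤ q := sq_nonneg _
  have hq1 : q < 1 := q_lt_one hδ hδ'
  -- choose the power m
  obtain ⟨m, hm1, hm⟩ : ∃ m : ℕ, 1 ≤ m ∧ (2*(m:ℝ)+1)^K * q^m < 1 := by
    have T := tendsto_pow_const_mul_const_pow_of_lt_one K hq0 hq1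
    have h3 : (0:ℝ) < ((3:ℝ)^K)⁻¹ := by positivity
    obtain ⟨m, hm2, hm1⟩ := ((T.eventually (gt_mem_nhds h3)).and
      (Filter.eventually_ge_atTop 1)).exists
    refine ⟨m, hm1, ?_⟩
    have hm1' : (1:ℝ) ≤ (m:ℝ) := by exact_mod_cast hm1
    calc (2*(m:ℝ)+1)^K * q^m ≤ (3*(m:ℝ))^K * q^m := by
          gcongr
          linarith
      _ = (3:ℝ)^K * ((m:ℝ)^K * q^m) := by rw [mul_pow]; ring
      _ < (3:ℝ)^K * ((3:ℝ)^K)⁻¹ := by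
          apply mul_lt_mul_of_pos_left hm2 (by positivity)
      _ = 1 := mul_inv_cancel₀ (by positivity)
  set C : ℝ := ((2*m).choose m : ℝ) with hC
  have hCpos : 0 < C := by
    rw [hC]; exact_mod_cast Nat.choose_pos (by omega)
  set A : ℝ := ((4:ℝ)^m)^K with hA
  have hApos : 0 < A := by rw [hA]; positivity
  have hkey : A * q^m < C^K := by
    have h4 : (4:ℝ)^m ≤ (2*(m:ℝ)+1) * C := by
      have := Nat.four_pow_le_two_mul_add_one_mul_central_binom m
      rw [hC]; exact_mod_cast this
    calc A * q^m ≤ ((2*(m:ℝ)+1) * C)^K * q^m := by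
          rw [hA]
          exact mul_le_mul_of_nonneg_right
            (pow_le_pow_left₀ (by positivity) h4 K) (by positivity)
      _ = C^K * ((2*(m:ℝ)+1)^K * q^m) := by rw [mul_pow]; ring
      _ < C^K * 1 := mul_lt_mul_of_pos_left hm (by positivity)
      _ = C^K := mul_one _
  -- combinatorial data
  set J := Finset.range (2*m+1) with hJ
  set G := Fintype.piFinset (fun _ : Fin K => J) with hG
  set g₀ : Fin K → ℕ := fun _ => m with hg₀def
  have hg₀ : g₀ ∈ G := by
    rw [hG, Fintype.mem_piFinset]
    intro k
    simp only [hg₀def, hJ, Finset.mem_range]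
    omega
  set s : (Fin K → ℕ) → ℝ := fun g => ∑ k, α k * ((g k : ℝ) - m) with hs
  set w : (Fin K → ℕ) → ℝ := fun g => ∑ k, (-(t k)) * ((g k : ℝ) - m) with hw
  set c : (Fin K → ℕ) → ℝ := fun g => ∏ k, (((2*m).choose (g k) : ℕ) : ℝ) with hc
  have hcnonneg : ∀ g, 0 ≤ c g := fun g => Finset.prod_nonneg fun k _ => by positivity
  have hs0 : s g₀ = 0 := by
    rw [hs]; simp [hg₀def]
  have hw0 : w g₀ = 0 := by
    rw [hw]; simp [hg₀def]
  have hc0 : c g₀ = C^K := by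
    simp only [hc, hg₀def, hC]
    rw [Finset.prod_const, Finset.card_univ, Fintype.card_fin]
  have hzne : ∀ g, g ≠ g₀ → Ee (s g) ≠ 1 := by
    intro g hgne h1
    unfold Ee at h1
    rw [Complex.exp_eq_one_iff] at h1
    obtain ⟨n, hn⟩ := h1
    have hne : (2*(Real.pi:ℂ)*Complex.I : ℂ) ≠ 0 := by
      simp [Real.pi_ne_zero, Complex.I_ne_zero]
    have h2 : ((s g : ℝ) : ℂ) = (n : ℂ) := by
      apply mul_left_cancel₀ hne
      rw [show 2*(Real.pi:ℂ)*Complex.I * (n:ℂ) = (n:ℂ) * (2*Real.pi*Complex.I) by ring]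
      rw [← hn]
    have h3 : s g = (n:ℝ) := by exact_mod_cast h2
    have h4 := hirr (-n) (fun k => (g k : ℤ) - m) (by
      push_cast
      have h5 : ∑ k, ((g k:ℝ) - (m:ℝ)) * α k = s g := by
        rw [hs]; exact Finset.sum_congr rfl fun k _ => by ring
      rw [h5, h3]; ring)
    apply hgne
    funext k
    have h6 : (g k : ℤ) - (m : ℤ) = 0 := h4 k
    simp only [hg₀def]
    omega
  set B := ∑ g ∈ G.erase g₀, c g * (2 / ‖Ee (s g) - 1‖) with hB
  have hBnonneg : 0 ≤ B := Finset.sum_nonneg fun g hg =>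
    mul_nonneg (hcnonneg g) (by positivity)
  obtain ⟨N, hN⟩ := exists_nat_gt (B / (C^K - A*q^m))
  have hNineq : B < (N:ℝ) * (C^K - A*q^m) := by
    rw [div_lt_iff₀ (by linarith)] at hN
    linarith
  set P : ℕ → ℝ := fun d => ∏ k, (Real.cos (Real.pi * ((d:ℝ) * α k - t k)))^(2*m) with hP
  -- expansion of each P d
  have expand : ∀ d : ℕ, ((P d : ℝ) : ℂ) * (A : ℂ)
      = ∑ g ∈ G, (c g : ℂ) * (Ee (w g) * Ee (s g) ^ d) := by
    intro d
    have e1 : ((P d : ℝ) : ℂ) * (A : ℂ)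
        = ∏ k : Fin K, (((Real.cos (Real.pi * ((d:ℝ) * α k - t k)) : ℝ) : ℂ)^(2*m) * (4:ℂ)^m) := by
      rw [hP, hA]
      push_cast
      rw [Finset.prod_mul_distrib, Finset.prod_const, Finset.card_univ, Fintype.card_fin]
    rw [e1, Finset.prod_congr rfl (fun k _ => cos_pow ((d:ℝ) * α k - t k) m)]
    rw [← hJ, Finset.prod_univ_sum]
    rw [← hG]
    refine Finset.sum_congr rfl fun g hg => ?_
    rw [Finset.prod_mul_distrib]
    have ec : (∏ k : Fin K, (((2*m).choose (g k) : ℕ) : ℂ)) = ((c g : ℝ) : ℂ) := by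
      rw [hc]; push_cast; rfl
    have ee : (∏ k : Fin K, Ee (((d:ℝ) * α k - t k) * ((g k:ℝ) - m)))
        = Ee (w g) * Ee (s g) ^ d := by
      rw [← Ee_sum]
      have earg : ∑ k, ((d:ℝ) * α k - t k) * ((g k:ℝ) - m) = w g + (d:ℝ) * s g := by
        rw [hw, hs, Finset.mul_sum, ← Finset.sum_add_distrib]
        exact Finset.sum_congr rfl fun k _ => by ring
      rw [earg, Ee_add, Ee_pow]
    rw [ec, ee]
  set T : ℝ := ∑ d ∈ Finset.range N, P (d+1) with hT
  have hTsum : ((T : ℝ) : ℂ) * (A:ℂ)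
      = (((N:ℝ) * C^K : ℝ) : ℂ)
        + ∑ g ∈ G.erase g₀, (c g : ℂ) * (Ee (w g) * ∑ d ∈ Finset.range N, Ee (s g)^(d+1)) := by
    have e3 : ((T:ℝ):ℂ) * (A:ℂ) = ∑ d ∈ Finset.range N, (((P (d+1) : ℝ):ℂ) * (A:ℂ)) := by
      rw [hT]; push_cast; rw [Finset.sum_mul]
    rw [e3, Finset.sum_congr rfl fun d _ => expand (d+1), Finset.sum_comm]
    have e4 : ∀ g, ∑ d ∈ Finset.range N, (c g:ℂ) * (Ee (w g) * Ee (s g)^(d+1))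
        = (c g:ℂ) * (Ee (w g) * ∑ d ∈ Finset.range N, Ee (s g)^(d+1)) := by
      intro g
      simp only [Finset.mul_sum]
    rw [Finset.sum_congr rfl fun g _ => e4 g]
    rw [← Finset.add_sum_erase G _ hg₀]
    congr 1
    rw [hs0, hw0, hc0, Ee_zero]
    simp
    ring
  have hbound : ‖((T:ℝ):ℂ) * (A:ℂ) - (((N:ℝ) * C^K : ℝ):ℂ)‖ ≤ B := by
    rw [hTsum, add_sub_cancel_left]
    calc ‖∑ g ∈ G.erase g₀, (c g : ℂ) * (Ee (w g) * ∑ d ∈ Finset.range N, Ee (s g)^(d+1))‖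
        ≤ ∑ g ∈ G.erase g₀, ‖(c g : ℂ) * (Ee (w g) * ∑ d ∈ Finset.range N, Ee (s g)^(d+1))‖ :=
          norm_sum_le _ _
      _ ≤ B := by
          rw [hB]
          apply Finset.sum_le_sum
          intro g hg
          rw [Finset.mem_erase] at hg
          rw [norm_mul, norm_mul, abs_Ee, one_mul, Complex.norm_real, Real.norm_eq_abs,
            abs_of_nonneg (hcnonneg g)]
          exact mul_le_mul_of_nonneg_left
            (geom_bound (abs_Ee (s g)) (hzne g hg.1) N) (hcnonneg g)
  have hTlow : (N:ℝ) * C^K - B ≤ T * A := by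
    have h5 : ((T:ℝ):ℂ) * (A:ℂ) - (((N:ℝ)*C^K:ℝ):ℂ) = ((T*A - (N:ℝ)*C^K : ℝ):ℂ) := by
      push_cast; ring
    rw [h5, Complex.norm_real, Real.norm_eq_abs] at hbound
    have h6 := (abs_le.mp hbound).1
    linarith
  by_contra hcon
  push_neg at hcon
  have hPle : ∀ d ∈ Finset.range N, P (d+1) ≤ q^m := by
    intro d _
    obtain ⟨k₀, hk₀⟩ := hcon (d+1) (Nat.succ_pos d)
    have hcop : ∀ k : Fin K, (Real.cos (Real.pi * (((d+1:ℕ):ℝ) * α k - t k)))^(2*m)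
        = ((Real.cos (Real.pi * (((d+1:ℕ):ℝ) * α k - t k)))^2)^m := by
      intro k; rw [← pow_mul]
    have hck : (Real.cos (Real.pi * (((d+1:ℕ):ℝ) * α k₀ - t k₀)))^2 ≤ q := by
      by_contra hq'
      push_neg at hq'
      rw [hqdef] at hq'
      exact absurd (cos_sq_lt hδ hδ' hq') (not_lt.mpr hk₀)
    rw [hP]
    calc ∏ k : Fin K, (Real.cos (Real.pi * (((d+1:ℕ):ℝ) * α k - t k)))^(2*m)
        ≤ ∏ k : Fin K, (if k = k₀ then q^m else 1) := by
          apply Finset.prod_le_prod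
          · intro k _; rw [hcop k]; positivity
          · intro k _
            by_cases hk : k = k₀
            · simp only [hk, if_pos rfl]
              rw [hcop k₀]
              exact pow_le_pow_left₀ (sq_nonneg _) hck m
            · simp only [if_neg hk]
              rw [hcop k]
              apply pow_le_one₀
              · positivity
              · exact Real.cos_sq_le_one _
      _ = q^m := by rw [Finset.prod_ite_eq' Finset.univ k₀ (fun _ => q^m)]; simp
  have hTle : T ≤ (N:ℝ) * q^m := by
    rw [hT]
    calc ∑ d ∈ Finset.range N, P (d+1) ≤ ∑ _d ∈ Finset.range N, q^m :=
          Finset.sum_le_sum hPle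
      _ = (N:ℝ) * q^m := by rw [Finset.sum_const, Finset.card_range, nsmul_eq_mul]
  have hTA : T * A ≤ (N:ℝ) * q^m * A := mul_le_mul_of_nonneg_right hTle hApos.le
  nlinarith [hTlow, hNineq, hTA]

end IA


/-- **Interference alignment via antenna separation.** If `1, cos θ₁, …, cos θ_K`
are linearly independent over `ℚ`, then for every `ε > 0` there is a positive
integer separation `d` such that the desired channel vector `h(θᵢ; d)` is within
`ε` of `u = (1,1)/√2` while every interfering channel vector `h(θₖ; d)`, `k ≠ i`,
is within `ε` of `v = (1,-1)/√2`, where `u ⊥ v` are unit vectors in `ℂ²`. -/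
theorem interference_alignment_two_antennas (K : ℕ) (hK : 1 ≤ K) (θ : Fin K → ℝ)
    (hind : ∀ (q₀ : ℚ) (q : Fin K → ℚ),
      (q₀ : ℝ) + ∑ k, (q k : ℝ) * Real.cos (θ k) = 0 → q₀ = 0 ∧ ∀ k, q k = 0)
    (i : Fin K)
    (u v : EuclideanSpace ℂ (Fin 2))
    (hu : u = (WithLp.equiv 2 (Fin 2 → ℂ)).symm
      ![(1 : ℂ) / Real.sqrt 2, (1 : ℂ) / Real.sqrt 2])
    (hv : v = (WithLp.equiv 2 (Fin 2 → ℂ)).symm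
      ![(1 : ℂ) / Real.sqrt 2, -(1 : ℂ) / Real.sqrt 2]) :
    (inner ℂ u v = (0 : ℂ)) ∧ ‖u‖ = 1 ∧ ‖v‖ = 1 ∧
    ∀ ε : ℝ, 0 < ε → ∃ d : ℕ, 0 < d ∧
      ‖channelVec (θ i) d - u‖ < ε ∧
      ∀ k : Fin K, k ≠ i → ‖channelVec (θ k) d - v‖ < ε := by
  have hπ := Real.pi_pos
  have hs2 : (0:ℝ) < Real.sqrt 2 := Real.sqrt_pos.mpr (by norm_num)
  have hs2' : (1:ℝ) ≤ Real.sqrt 2 := by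
    rw [show (1:ℝ) = Real.sqrt 1 by simp]
    exact Real.sqrt_le_sqrt (by norm_num)
  have habs : ‖(1:ℂ) / Real.sqrt 2‖ = 1 / Real.sqrt 2 := by
    rw [norm_div, norm_one, Complex.norm_real, Real.norm_eq_abs, abs_of_pos hs2]
  have hsq : (1 / Real.sqrt 2 : ℝ)^2 = 1/2 := by
    rw [div_pow, one_pow, Real.sq_sqrt (by norm_num : (0:ℝ) ≤ 2)]
  subst hu hv
  refine ⟨?_, ?_, ?_, ?_⟩
  · -- inner product zero
    simp only [PiLp.inner_apply, RCLike.inner_apply, Fin.sum_univ_two,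
      WithLp.equiv_symm_apply, PiLp.toLp_apply, Matrix.cons_val_zero, Matrix.cons_val_one, Matrix.head_cons]
    rw [map_div₀, map_one, Complex.conj_ofReal]
    ring
  · rw [EuclideanSpace.norm_eq]
    simp only [WithLp.equiv_symm_apply, PiLp.toLp_apply, Fin.sum_univ_two,
      Matrix.cons_val_zero, Matrix.cons_val_one, Matrix.head_cons]
    rw [habs, hsq]
    norm_num
  · rw [EuclideanSpace.norm_eq]
    simp only [WithLp.equiv_symm_apply, PiLp.toLp_apply, Fin.sum_univ_two,
      Matrix.cons_val_zero, Matrix.cons_val_one, Matrix.head_cons]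
    rw [show ‖-(1:ℂ) / Real.sqrt 2‖ = ‖(1:ℂ) / Real.sqrt 2‖ by
      rw [neg_div, norm_neg]]
    rw [habs, hsq]
    norm_num
  · intro ε hε
    set α : Fin K → ℝ := fun k => Real.cos (θ k) with hα
    set t : Fin K → ℝ := fun k => if k = i then 0 else 1/2 with ht
    have hirr : ∀ (n : ℤ) (e : Fin K → ℤ), ((n:ℝ) + ∑ k, (e k : ℝ) * α k = 0) → ∀ k, e k = 0 := by
      intro n e he
      have h1 := hind (n : ℚ) (fun k => (e k : ℚ)) (by push_cast; push_cast at he; exact he)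
      intro k
      have h2 : ((e k : ℚ)) = 0 := h1.2 k
      exact_mod_cast h2
    set δ : ℝ := min (ε / (4*Real.pi + 4)) (1/8) with hδdef
    have hδ : 0 < δ := lt_min (by positivity) (by norm_num)
    have hδ8 : δ ≤ 1/8 := min_le_right _ _
    have hδε : δ ≤ ε / (4*Real.pi + 4) := min_le_left _ _
    have hδ' : δ < 1/2 := lt_of_le_of_lt hδ8 (by norm_num)
    obtain ⟨d, hd, hclose⟩ := IA.kronecker α t hirr hδ hδ'
    -- the norm formula
    have hnorm : ∀ (θ₀ : ℝ) (b : ℂ),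
        ‖channelVec θ₀ d - (WithLp.equiv 2 (Fin 2 → ℂ)).symm ![(1:ℂ)/Real.sqrt 2, b/Real.sqrt 2]‖
          = ‖Complex.exp (2*Real.pi*Complex.I*d*Real.cos θ₀) - b‖ / Real.sqrt 2 := by
      intro θ₀ b
      rw [EuclideanSpace.norm_eq]
      simp only [channelVec, WithLp.equiv_symm_apply, PiLp.toLp_apply, PiLp.sub_apply, Fin.sum_univ_two,
        Matrix.cons_val_zero, Matrix.cons_val_one, Matrix.head_cons]
      rw [sub_self, norm_zero]
      rw [div_sub_div_same, norm_div, Complex.norm_real, Real.norm_eq_abs, abs_of_pos hs2]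
      rw [show (0:ℝ)^2 + (‖Complex.exp (2*Real.pi*Complex.I*d*Real.cos θ₀) - b‖ / Real.sqrt 2)^2
          = (‖Complex.exp (2*Real.pi*Complex.I*d*Real.cos θ₀) - b‖ / Real.sqrt 2)^2 by ring]
      exact Real.sqrt_sq (by positivity)
    have hexp : ∀ θ₀ : ℝ, Complex.exp (2*Real.pi*Complex.I*d*Real.cos θ₀)
        = IA.Ee ((d:ℝ) * Real.cos θ₀) := by
      intro θ₀
      unfold IA.Ee
      congr 1
      push_cast
      ring
    have hbig : 2 * Real.pi * δ ≤ 1 := by nlinarith [Real.pi_le_four]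
    have hfinal : 4 * Real.pi * δ < ε := by
      have h7 : 4 * Real.pi * δ ≤ 4 * Real.pi * (ε / (4*Real.pi + 4)) := by
        apply mul_le_mul_of_nonneg_left hδε (by positivity)
      have h8 : 4 * Real.pi * (ε / (4*Real.pi + 4)) < ε := by
        have hx : 0 < ε / (4*Real.pi + 4) := by positivity
        have hxe : ε / (4*Real.pi + 4) * (4*Real.pi + 4) = ε :=
          div_mul_cancel₀ ε (by positivity)
        nlinarith
      linarith
    refine ⟨d, hd, ?_, ?_⟩
    · -- desired channel near u
      have hci : |(d:ℝ) * α i - round ((d:ℝ) * α i)| < δ := by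
        simpa [ht] using hclose i
      have hb : ‖IA.Ee ((d:ℝ) * α i) - 1‖
          ≤ 4*Real.pi*|(d:ℝ) * α i - round ((d:ℝ) * α i)| := by
        apply IA.Ee_near_int
        have : |(d:ℝ) * α i - round ((d:ℝ) * α i)| < δ := hci
        nlinarith
      rw [show ((1:ℂ)/Real.sqrt 2 : ℂ) = (1:ℂ)/Real.sqrt 2 from rfl]
      have hrw : ((WithLp.equiv 2 (Fin 2 → ℂ)).symm
          ![(1 : ℂ) / Real.sqrt 2, (1 : ℂ) / Real.sqrt 2] : EuclideanSpace ℂ (Fin 2))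
          = (WithLp.equiv 2 (Fin 2 → ℂ)).symm ![(1:ℂ)/Real.sqrt 2, (1:ℂ)/Real.sqrt 2] := rfl
      calc ‖channelVec (θ i) d - (WithLp.equiv 2 (Fin 2 → ℂ)).symm
            ![(1:ℂ)/Real.sqrt 2, (1:ℂ)/Real.sqrt 2]‖
          = ‖Complex.exp (2*Real.pi*Complex.I*d*Real.cos (θ i)) - 1‖ / Real.sqrt 2 :=
            hnorm (θ i) 1
        _ ≤ ‖Complex.exp (2*Real.pi*Complex.I*d*Real.cos (θ i)) - 1‖ :=
            div_le_self (by positivity) hs2'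
        _ = ‖IA.Ee ((d:ℝ) * α i) - 1‖ := by rw [hexp (θ i)]
        _ ≤ 4*Real.pi*|(d:ℝ) * α i - round ((d:ℝ) * α i)| := hb
        _ < 4*Real.pi*δ := by
            apply mul_lt_mul_of_pos_left hci (by positivity)
        _ < ε := hfinal
    · -- interferers near v
      intro k hk
      have hck : |(d:ℝ) * α k - 1/2 - round ((d:ℝ) * α k - 1/2)| < δ := by
        simpa [ht, hk] using hclose k
      have hb : ‖IA.Ee ((d:ℝ) * α k) + 1‖
          ≤ 4*Real.pi*|(d:ℝ) * α k - 1/2 - round ((d:ℝ) * α k - 1/2)| := by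
        apply IA.Ee_near_half
        nlinarith [hck]
      have hveq : ((WithLp.equiv 2 (Fin 2 → ℂ)).symm
          ![(1 : ℂ) / Real.sqrt 2, -(1 : ℂ) / Real.sqrt 2] : EuclideanSpace ℂ (Fin 2))
          = (WithLp.equiv 2 (Fin 2 → ℂ)).symm ![(1:ℂ)/Real.sqrt 2, (-1:ℂ)/Real.sqrt 2] := by
        norm_num
      rw [hveq]
      calc ‖channelVec (θ k) d - (WithLp.equiv 2 (Fin 2 → ℂ)).symm
            ![(1:ℂ)/Real.sqrt 2, (-1:ℂ)/Real.sqrt 2]‖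
          = ‖Complex.exp (2*Real.pi*Complex.I*d*Real.cos (θ k)) - (-1)‖ / Real.sqrt 2 :=
            hnorm (θ k) (-1)
        _ ≤ ‖Complex.exp (2*Real.pi*Complex.I*d*Real.cos (θ k)) - (-1)‖ :=
            div_le_self (by positivity) hs2'
        _ = ‖IA.Ee ((d:ℝ) * α k) + 1‖ := by rw [hexp (θ k), sub_neg_eq_add]
        _ ≤ 4*Real.pi*|(d:ℝ) * α k - 1/2 - round ((d:ℝ) * α k - 1/2)| := hb
        _ < 4*Real.pi*δ := by
            apply mul_lt_mul_of_pos_left hck (by positivity)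
        _ < ε := hfinal
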